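/- Let S = S(k_0, k_1, k_2, …) and S' = S(k'_0, k'_1, k'_2, …) be LR-strings in alternating block form. Then r(S) < r(S') if and only if there is an index i with k_j = k'_j for all j < i and, at position i, either i is even and k_i < k'_i, or i is odd and k_i > k'_i (where a missing block is treated via the convention that the string ends). -/

import Mathlib

/-!
Peeling off the first block, `r(S(k₀, k₁, k₂, …)) = 2 - r(S(k₁, k₂, …)) / 2^{k₀}`, since the
remaining blocks start with `L` and `r(S.map not) = 2 - r(S)`. Every value lies in `(0, 2)`, and
in `[1, 2)` when the leading exponent is positive; so a larger leading exponent always gives the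
larger value, while equal leading exponents reverse the comparison of the tails. That reversal
is the alternation of the lexicographic order.
-/

open List

/-- `r`-value of an LR-string (`true` = R, `false` = L):
`r(ε) = 1`, `r(SL) = r(S) - 2^(-|SL|)`, `r(SR) = r(S) + 2^(-|SR|)`. -/
def rval (S : List Bool) : ℚ :=
  1 + ∑ i ∈ Finset.range S.length,
      (if S.getD i false then ((2:ℚ)^(i+1))⁻¹ else -((2:ℚ)^(i+1))⁻¹)

/-- Generalized strings: LR-strings plus the formal symbols `R⁻¹ = inv true`
and `L⁻¹ = inv false`. -/
inductive Gen where
  | inv : Bool → Gen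
  | str : List Bool → Gen
deriving DecidableEq

/-- Left parent: `P_L(ε) = R⁻¹`, `P_L(SL) = P_L(S)`, `P_L(SR) = S`. -/
def PL (S : List Bool) : Gen :=
  match S.reverse.dropWhile (· = false) with
  | [] => Gen.inv true
  | _ :: t => Gen.str t.reverse

/-- Right parent: `P_R(ε) = L⁻¹`, `P_R(SL) = S`, `P_R(SR) = P_R(S)`. -/
def PR (S : List Bool) : Gen :=
  match S.reverse.dropWhile (· = true) with
  | [] => Gen.inv false
  | _ :: t => Gen.str t.reverse

/-- Extension of `r` to generalized strings: `r(R⁻¹) = 0`, `r(L⁻¹) = 2`. -/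
def rg : Gen → ℚ
  | Gen.inv true => 0
  | Gen.inv false => 2
  | Gen.str S => rval S

/-- Length of a generalized string; the formal symbols have length `-1`. -/
def glen : Gen → ℤ
  | Gen.inv _ => -1
  | Gen.str S => S.length

/-- Position function: `N(ε) = 0`, `N(SL) = 2N(S)+1`, `N(SR) = 2N(S)+2`. -/
def posN (S : List Bool) : ℕ :=
  ∑ i ∈ Finset.range S.length, (if S.getD i false then 2 else 1) * 2^(S.length - 1 - i)

/-- The alternating-block string `S(k₀,…,k_m) = R^{k₀} L^{k₁} R^{k₂} ⋯`. -/
def blockStr (ks : List ℕ) : List Bool :=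
  (ks.zipIdx.map (fun p => List.replicate p.1 (decide (p.2 % 2 = 0)))).flatten

/-- Continued fraction `[q₀,…,q_m]`. -/
def cf : List ℚ → ℚ
  | [] => 0
  | [q] => q
  | q :: qs => q + (cf qs)⁻¹

/-- Admissible continued-fraction index sequences: `[q₀]` with `q₀ ≥ 1`, or
`[q₀,…,q_m]` with `m ≥ 1`, intermediate `qᵢ ≥ 1`, and `q_m ≥ 2`. -/
def CFAdmissible (qs : List ℕ) : Prop :=
  qs ≠ [] ∧ (qs.length = 1 → 1 ≤ qs.getD 0 0) ∧
    (∀ i, 1 ≤ i → i + 1 < qs.length → 1 ≤ qs.getD i 0) ∧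
    (2 ≤ qs.length → 2 ≤ qs.getLastD 0)

/-- The map `f([q₀,…,q_m]) = S(q₀,…,q_{m-1},q_m - 1)`. -/
def cfToStr (qs : List ℕ) : List Bool :=
  blockStr (qs.dropLast ++ [qs.getLastD 0 - 1])

lemma rval_cons (b : Bool) (S : List Bool) :
    rval (b :: S) = (if b then 1 else 0) + rval S / 2 := by
  unfold rval
  rw [List.length_cons, Finset.sum_range_succ']
  simp only [List.getD_cons_succ, List.getD_cons_zero]
  have halve : ∀ i, (if S.getD i false then ((2:ℚ)^(i+1+1))⁻¹ else -((2:ℚ)^(i+1+1))⁻¹)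
      = (if S.getD i false then ((2:ℚ)^(i+1))⁻¹ else -((2:ℚ)^(i+1))⁻¹) / 2 := by
    intro i; split <;> rw [pow_succ] <;> ring
  rw [Finset.sum_congr rfl fun i _ => halve i, ← Finset.sum_div]
  cases b <;> simp <;> ring

lemma rval_map_not (S : List Bool) : rval (S.map not) = 2 - rval S := by
  induction S with
  | nil => simp [rval]; norm_num
  | cons b S ih => cases b <;> simp [rval_cons, ih] <;> ring

lemma rval_pos_and_lt_two (S : List Bool) : 0 < rval S ∧ rval S < 2 := by
  induction S with
  | nil => simp [rval]
  | cons b S ih => cases b <;> simp only [rval_cons] <;> constructor <;> split_ifs <;> linarith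

lemma rval_replicate_true_append (k : ℕ) (S : List Bool) :
    rval (List.replicate k true ++ S) = 2 - (2 - rval S) / 2 ^ k := by
  induction k with
  | zero => simp
  | succ k ih =>
    rw [List.replicate_succ, List.cons_append, rval_cons, ih, if_pos rfl, pow_succ]; ring

lemma blockStr_cons (k : ℕ) (ks : List ℕ) :
    blockStr (k :: ks) = List.replicate k true ++ (blockStr ks).map not := by
  have shift : ∀ p : ℕ × ℕ, List.replicate p.1 (decide ((p.2 + 1) % 2 = 0))
      = (List.replicate p.1 (decide (p.2 % 2 = 0))).map not := by
    intro p
    rw [List.map_replicate]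
    cases Nat.mod_two_eq_zero_or_one p.2 <;> simp [*, Nat.succ_mod_two_eq_zero_iff]
  simp only [blockStr, List.zipIdx_cons, List.map_cons, List.flatten_cons, List.zipIdx_succ,
    List.map_map, List.map_flatten]
  simp [Function.comp_def, shift]

lemma rval_blockStr_cons (k : ℕ) (ks : List ℕ) :
    rval (blockStr (k :: ks)) = 2 - rval (blockStr ks) / 2 ^ k := by
  rw [blockStr_cons, rval_replicate_true_append, rval_map_not]; ring

lemma one_le_rval_blockStr {ks : List ℕ} (h : ∀ k ∈ ks, 1 ≤ k) : 1 ≤ rval (blockStr ks) := by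
  cases ks with
  | nil => simp [blockStr, rval]
  | cons k t =>
    have hk : (2:ℚ) ≤ 2 ^ k :=
      le_self_pow₀ (by norm_num) (Nat.one_le_iff_ne_zero.mp (h k List.mem_cons_self))
    have ht := (rval_pos_and_lt_two (blockStr t)).2
    rw [rval_blockStr_cons, le_sub_comm, div_le_iff₀ (by positivity)]
    linarith

lemma div_two_pow_lt_div_two_pow {k k' : ℕ} {x y : ℚ} (hk : k < k') (hx : 1 ≤ x) (hy : y < 2) :
    y / 2 ^ k' < x / 2 ^ k := by
  rw [div_lt_div_iff₀ (by positivity) (by positivity)]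
  calc y * 2 ^ k < 2 * 2 ^ k := by gcongr
    _ = 1 * 2 ^ (k + 1) := by ring
    _ ≤ x * 2 ^ k' := by gcongr; exacts [by norm_num, hk]

lemma two_sub_div_two_pow_lt_iff {k k' : ℕ} {x y : ℚ} (hx : 1 ≤ x) (hx' : x < 2)
    (hy : 1 ≤ y) (hy' : y < 2) :
    2 - x / 2 ^ k < 2 - y / 2 ^ k' ↔ k < k' ∨ k = k' ∧ y < x := by
  rcases lt_trichotomy k k' with hkk | rfl | hkk
  · simpa [hkk] using div_two_pow_lt_div_two_pow hkk hx hy'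
  · simp [div_lt_div_iff_of_pos_right (by positivity : (0:ℚ) < 2 ^ k)]
  · simpa [hkk.not_gt, hkk.ne'] using (div_two_pow_lt_div_two_pow hkk hy hx').le

def AltLexLT (f g : ℕ → ℕ) : Prop :=
  ∃ i, (∀ j < i, f j = g j) ∧ (Even i ∧ f i < g i ∨ Odd i ∧ g i < f i)

lemma altLexLT_iff {f g : ℕ → ℕ} :
    AltLexLT f g ↔ f 0 < g 0 ∨ f 0 = g 0 ∧ AltLexLT (fun n ↦ g (n + 1)) (fun n ↦ f (n + 1)) := by
  constructor
  · rintro ⟨_ | i, hprefix, hi⟩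
    · exact .inl (by simpa using hi)
    · refine .inr ⟨hprefix 0 i.succ_pos, i, fun j hj ↦ (hprefix (j + 1) (by omega)).symm, ?_⟩
      simpa [Nat.even_add_one, Nat.odd_add_one, or_comm] using hi
  · rintro (h0 | ⟨h0, i, hprefix, hi⟩)
    · exact ⟨0, nofun, .inl ⟨Even.zero, h0⟩⟩
    · refine ⟨i + 1, fun j hj ↦ ?_, ?_⟩
      · cases j with
        | zero => exact h0
        | succ j => exact (hprefix j (by omega)).symm
      · simpa [Nat.even_add_one, Nat.odd_add_one, or_comm] using hi

lemma rval_blockStr_cons_lt_cons_iff {k k' : ℕ} {t t' : List ℕ} (ht : ∀ x ∈ t, 1 ≤ x)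
    (ht' : ∀ x ∈ t', 1 ≤ x) :
    rval (blockStr (k :: t)) < rval (blockStr (k' :: t')) ↔
      k < k' ∨ k = k' ∧ rval (blockStr t') < rval (blockStr t) := by
  rw [rval_blockStr_cons, rval_blockStr_cons]
  exact two_sub_div_two_pow_lt_iff (one_le_rval_blockStr ht) (rval_pos_and_lt_two _).2
    (one_le_rval_blockStr ht') (rval_pos_and_lt_two _).2

-- Replacing `[]` by `[0]` changes neither the string nor the exponent sequence.
lemma rval_blockStr_headD_cons_tail (l : List ℕ) :
    rval (blockStr (l.headD 0 :: l.tail)) = rval (blockStr l) := by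
  cases l <;> simp [blockStr, rval]

lemma getD_headD_cons_tail (l : List ℕ) :
    ((l.headD 0 :: l.tail).getD · 0) = (l.getD · 0) := by
  funext i; cases l <;> cases i <;> simp

theorem rval_blockStr_lt_iff_altLexLT (ks ks' : List ℕ) (h : ∀ x ∈ ks.tail, 1 ≤ x)
    (h' : ∀ x ∈ ks'.tail, 1 ≤ x) :
    rval (blockStr ks) < rval (blockStr ks') ↔ AltLexLT (ks.getD · 0) (ks'.getD · 0) := by
  induction hn : ks.length + ks'.length using Nat.strong_induction_on generalizing ks ks' with
  | h n ih =>
    by_cases hnil : ks = [] ∧ ks' = []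
    · obtain ⟨rfl, rfl⟩ := hnil
      simp [AltLexLT]
    have hlen : ks'.tail.length + ks.tail.length < n := by
      simp only [List.length_tail]; cases ks <;> cases ks' <;> simp_all <;> omega
    have htails := ih _ hlen ks'.tail ks.tail (fun x hx ↦ h' x (List.mem_of_mem_tail hx))
      (fun x hx ↦ h x (List.mem_of_mem_tail hx)) rfl
    rw [← rval_blockStr_headD_cons_tail ks, ← rval_blockStr_headD_cons_tail ks',
      ← getD_headD_cons_tail ks, ← getD_headD_cons_tail ks', altLexLT_iff,
      rval_blockStr_cons_lt_cons_iff h h', htails]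
    simp only [List.getD_cons_zero, List.getD_cons_succ]

lemma forall_mem_tail_one_le {l : List ℕ} (h : ∀ i, 1 ≤ i → i < l.length → 1 ≤ l.getD i 0) :
    ∀ x ∈ l.tail, 1 ≤ x := by
  intro x hx
  obtain ⟨j, hj, rfl⟩ := List.mem_iff_getElem.1 hx
  have hj' : j + 1 < l.length := by rw [List.length_tail] at hj; omega
  simpa [List.getElem?_eq_getElem hj'] using h (j + 1) (by omega) hj'

theorem stmt13_general (ks ks' : List ℕ)
    (hpos : ∀ i, 1 ≤ i → i < ks.length → 1 ≤ ks.getD i 0)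
    (hpos' : ∀ i, 1 ≤ i → i < ks'.length → 1 ≤ ks'.getD i 0) :
    rval (blockStr ks) < rval (blockStr ks') ↔
      ∃ i : ℕ, (∀ j < i, ks.getD j 0 = ks'.getD j 0) ∧
        ((Even i ∧ ks.getD i 0 < ks'.getD i 0) ∨
          (Odd i ∧ ks'.getD i 0 < ks.getD i 0)) :=
  rval_blockStr_lt_iff_altLexLT ks ks' (forall_mem_tail_one_le hpos) (forall_mem_tail_one_le hpos')

/-- Corollary 2.5(b): `r(S) < r(S')` iff the block-exponent sequences compare in
the alternating lexicographic order: at the first differing index `i`, either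
`i` is even and `kᵢ < k'ᵢ`, or `i` is odd and `kᵢ > k'ᵢ` (a missing block is
treated as exponent `0`, i.e. the string ends). -/
theorem stmt13 (ks ks' : List ℕ) (hne : ks ≠ []) (hne' : ks' ≠ [])
    (hpos : ∀ i, 1 ≤ i → i < ks.length → 1 ≤ ks.getD i 0)
    (hpos' : ∀ i, 1 ≤ i → i < ks'.length → 1 ≤ ks'.getD i 0) :
    rval (blockStr ks) < rval (blockStr ks') ↔
      ∃ i : ℕ, (∀ j < i, ks.getD j 0 = ks'.getD j 0) ∧
        ((Even i ∧ ks.getD i 0 < ks'.getD i 0) ∨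
          (Odd i ∧ ks'.getD i 0 < ks.getD i 0)) :=
  stmt13_general ks ks' hpos hpos'
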